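/- Let A be the adjacency matrix of a simple digraph G, and suppose (v_i, v_j) is an edge of G. Then E^+(v_i) + E^-(v_j) ≥ 2. -/

import Mathlib

open Matrix Finset

noncomputable section

/-- For a real matrix, `A * Aᵀ` is positive semidefinite. -/
theorem mulTranspose_posSemidef {m k : Type*} [Fintype m] [Fintype k] (A : Matrix m k ℝ) :
    (A * Aᵀ).PosSemidef := by
  have h := Matrix.posSemidef_self_mul_conjTranspose A
  rwa [Matrix.conjTranspose_eq_transpose_of_trivial] at h

/-- For a real matrix, `Aᵀ * A` is positive semidefinite. -/
theorem transposeMul_posSemidef {m k : Type*} [Fintype m] [Fintype k] (A : Matrix m k ℝ) :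
    (Aᵀ * A).PosSemidef := by
  simpa using mulTranspose_posSemidef Aᵀ

/-- `|A|⁺ = (A Aᵀ)^{1/2}` (psd square root). -/
def absPlus {V : Type*} [Fintype V] [DecidableEq V] (A : Matrix V V ℝ) : Matrix V V ℝ :=
  (mulTranspose_posSemidef A).isHermitian.eigenvectorUnitary.1 *
    diagonal ((RCLike.ofReal : ℝ → ℝ) ∘ Real.sqrt ∘ (mulTranspose_posSemidef A).isHermitian.eigenvalues) *
    (star (mulTranspose_posSemidef A).isHermitian.eigenvectorUnitary : Matrix V V ℝ)

/-- `|A|⁻ = (Aᵀ A)^{1/2}` (psd square root). -/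
def absMinus {V : Type*} [Fintype V] [DecidableEq V] (A : Matrix V V ℝ) : Matrix V V ℝ :=
  (transposeMul_posSemidef A).isHermitian.eigenvectorUnitary.1 *
    diagonal ((RCLike.ofReal : ℝ → ℝ) ∘ Real.sqrt ∘ (transposeMul_posSemidef A).isHermitian.eigenvalues) *
    (star (transposeMul_posSemidef A).isHermitian.eigenvectorUnitary : Matrix V V ℝ)

/-- The (Nikiforov) energy: `Tr((A Aᵀ)^{1/2})`, the sum of the singular values of `A`. -/
def energy {V : Type*} [Fintype V] [DecidableEq V] (A : Matrix V V ℝ) : ℝ := (absPlus A).trace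

/-- 0-1 adjacency matrix of the digraph with edge relation `E`. -/
def adjMat {V : Type*} [Fintype V] [DecidableEq V] (E : V → V → Prop) [DecidableRel E] :
    Matrix V V ℝ := Matrix.of fun i j => if E i j then 1 else 0

/-- Out-degree `d⁺(v)`. -/
def outDeg {V : Type*} [Fintype V] (E : V → V → Prop) [DecidableRel E] (v : V) : ℕ :=
  (univ.filter (fun w => E v w)).card

/-- In-degree `d⁻(w)`. -/
def inDeg {V : Type*} [Fintype V] (E : V → V → Prop) [DecidableRel E] (w : V) : ℕ :=
  (univ.filter (fun v => E v w)).card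

/-- Directed Randic index `R(G) = (1/2) Σ_{(v,w)∈E} 1/√(d⁺(v) d⁻(w))`. -/
def randic {V : Type*} [Fintype V] (E : V → V → Prop) [DecidableRel E] : ℝ :=
  (1/2) * ∑ v, ∑ w, if E v w then 1 / Real.sqrt (outDeg E v * inDeg E w) else 0

/-- Number of arcs of the digraph. -/
def numArcs {V : Type*} [Fintype V] (E : V → V → Prop) [DecidableRel E] : ℕ :=
  (univ.filter (fun p : V × V => E p.1 p.2)).card

/-- Maximum over vertices of in- and out-degrees, `Δ(G)`. -/
def maxDeg {V : Type*} [Fintype V] (E : V → V → Prop) [DecidableRel E] : ℕ :=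
  univ.sup (fun v => max (outDeg E v) (inDeg E v))

open scoped MatrixOrder

lemma absPlus_eq_cfc {V : Type*} [Fintype V] [DecidableEq V] (A : Matrix V V ℝ) :
    absPlus A = cfc Real.sqrt (A * Aᵀ) := by
  rw [(mulTranspose_posSemidef A).isHermitian.cfc_eq, Matrix.IsHermitian.cfc,
    Unitary.conjStarAlgAut_apply]
  rfl

lemma absMinus_eq_cfc {V : Type*} [Fintype V] [DecidableEq V] (A : Matrix V V ℝ) :
    absMinus A = cfc Real.sqrt (Aᵀ * A) := by
  rw [(transposeMul_posSemidef A).isHermitian.cfc_eq, Matrix.IsHermitian.cfc,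
    Unitary.conjStarAlgAut_apply]
  rfl

lemma absPlus_psd {V : Type*} [Fintype V] [DecidableEq V] (A : Matrix V V ℝ) :
    (absPlus A).PosSemidef := by
  rw [absPlus_eq_cfc, ← Matrix.nonneg_iff_posSemidef]
  exact cfc_nonneg fun x _ => Real.sqrt_nonneg x

lemma absMinus_psd {V : Type*} [Fintype V] [DecidableEq V] (A : Matrix V V ℝ) :
    (absMinus A).PosSemidef := by
  rw [absMinus_eq_cfc, ← Matrix.nonneg_iff_posSemidef]
  exact cfc_nonneg fun x _ => Real.sqrt_nonneg x


/-- Diagonal entries of a real PSD matrix are nonnegative. -/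
lemma posSemidef_diag_nonneg {n : ℕ} {M : Matrix (Fin n) (Fin n) ℝ} (hM : M.PosSemidef)
    (i : Fin n) : 0 ≤ M i i := by
  exact hM.diag_nonneg

/-- Key inequality: `(A i j)^2 ≤ |A|⁺_{ii} * |A|⁻_{jj}`. -/
lemma key_ineq {n : ℕ} (A : Matrix (Fin n) (Fin n) ℝ) (i j : Fin n) :
    (A i j) ^ 2 ≤ (absPlus A) i i * (absMinus A) j j := by
  classical
  set h : (Aᵀ * A).PosSemidef := transposeMul_posSemidef A with hh
  set hB : (A * Aᵀ).PosSemidef := mulTranspose_posSemidef A with hhB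
  set μ : Fin n → ℝ := h.1.eigenvalues with hμdef
  set U : Matrix (Fin n) (Fin n) ℝ := h.1.eigenvectorUnitary.1 with hUdef
  have hμ0 : ∀ k, 0 ≤ μ k := h.eigenvalues_nonneg
  -- unitarity
  have hU1 : U * Uᵀ = 1 := by
    have := (Matrix.mem_unitaryGroup_iff).mp h.1.eigenvectorUnitary.2
    rwa [Matrix.star_eq_conjTranspose, Matrix.conjTranspose_eq_transpose_of_trivial] at this
  have hU1' : Uᵀ * U = 1 := by
    have := (Matrix.mem_unitaryGroup_iff').mp h.1.eigenvectorUnitary.2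
    rwa [Matrix.star_eq_conjTranspose, Matrix.conjTranspose_eq_transpose_of_trivial] at this
  -- diagonalization
  have hdiag : Uᵀ * (Aᵀ * A) * U = Matrix.diagonal μ := by
    have := h.1.conjStarAlgAut_star_eigenvectorUnitary
    rwa [Unitary.conjStarAlgAut_apply, Unitary.coe_star, star_star, Matrix.star_eq_conjTranspose, Matrix.conjTranspose_eq_transpose_of_trivial,
      RCLike.ofReal_real_eq_id, Function.id_comp] at this
  set W : Matrix (Fin n) (Fin n) ℝ := A * U with hWdef
  have hWtW : Wᵀ * W = Matrix.diagonal μ := by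
    rw [hWdef, Matrix.transpose_mul]
    calc Uᵀ * Aᵀ * (A * U) = Uᵀ * (Aᵀ * A) * U := by noncomm_ring
    _ = Matrix.diagonal μ := hdiag
  have hW0 : ∀ k, μ k = 0 → ∀ x, W x k = 0 := by
    intro k hk x
    have hsum : ∑ m, W m k * W m k = 0 := by
      have := congrFun (congrFun hWtW k) k
      simp only [Matrix.mul_apply, Matrix.transpose_apply, Matrix.diagonal_apply_eq] at this
      rw [this, hk]
    have := Finset.sum_eq_zero_iff_of_nonneg (fun m _ => mul_self_nonneg (W m k)) |>.mp hsum
    exact mul_self_eq_zero.mp (this x (Finset.mem_univ x))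
  have hWWt : A * Aᵀ = W * Wᵀ := by
    rw [hWdef, Matrix.transpose_mul, Matrix.mul_assoc, ← Matrix.mul_assoc U Uᵀ Aᵀ, hU1,
      Matrix.one_mul]
  -- the candidate square root of A * Aᵀ
  set g : ℝ → ℝ := fun t => if 0 < t then (Real.sqrt t)⁻¹ else 0 with hgdef
  have hg0 : ∀ t, 0 ≤ g t := by
    intro t; rw [hgdef]; dsimp only
    split
    · exact inv_nonneg.mpr (Real.sqrt_nonneg t)
    · exact le_refl 0
  set S : Matrix (Fin n) (Fin n) ℝ := W * Matrix.diagonal (fun k => g (μ k)) * Wᵀ with hSdef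
  have hSpsd : S.PosSemidef := by
    have hD : (Matrix.diagonal (fun k => g (μ k))).PosSemidef :=
      Matrix.PosSemidef.diagonal (fun k => hg0 (μ k))
    have := hD.mul_mul_conjTranspose_same W
    rwa [Matrix.conjTranspose_eq_transpose_of_trivial] at this
  have hSS : S * S = A * Aᵀ := by
    have hWind : W * Matrix.diagonal (fun k => if 0 < μ k then (1:ℝ) else 0) = W := by
      ext x k
      rw [Matrix.mul_diagonal]
      rcases lt_or_eq_of_le (hμ0 k) with hk | hk
      · simp [hk]
      · simp [hW0 k hk.symm x]
    calc S * S = W * (Matrix.diagonal (fun k => g (μ k)) * (Wᵀ * W) *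
          Matrix.diagonal (fun k => g (μ k))) * Wᵀ := by rw [hSdef]; noncomm_ring
      _ = W * Matrix.diagonal (fun k => g (μ k) * μ k * g (μ k)) * Wᵀ := by
          rw [hWtW, Matrix.diagonal_mul_diagonal, Matrix.diagonal_mul_diagonal]
      _ = W * Matrix.diagonal (fun k => if 0 < μ k then (1:ℝ) else 0) * Wᵀ := by
          have hfun : (fun k => g (μ k) * μ k * g (μ k)) =
              (fun k => if 0 < μ k then (1:ℝ) else 0) := by
            funext k
            simp only [hgdef]
            rcases lt_or_eq_of_le (hμ0 k) with hk | hk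
            · rw [if_pos hk]
              rw [if_pos hk]
              have h1 : Real.sqrt (μ k) ≠ 0 := by positivity
              have h2 := Real.mul_self_sqrt (le_of_lt hk)
              field_simp
              rw [sq, h2]
            · have hknot : ¬ 0 < μ k := by rw [← hk]; exact lt_irrefl 0
              rw [if_neg hknot]
              rw [if_neg hknot]
              ring
          rw [hfun]
      _ = W * Wᵀ := by rw [hWind]
      _ = A * Aᵀ := hWWt.symm
  have hSsqrt : S = absPlus A := by
    rw [absPlus_eq_cfc, ← cfcₙ_eq_cfc (hf0 := Real.sqrt_zero),
      ← CFC.sqrt_eq_real_sqrt (A * Aᵀ) ((Matrix.nonneg_iff_posSemidef).2 hB)]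
    exact (CFC.sqrt_unique hSS ((Matrix.nonneg_iff_posSemidef).2 hSpsd)).symm
  -- diagonal entries
  have hBii : (absPlus A) i i = ∑ k, g (μ k) * (W i k) ^ 2 := by
    rw [← hSsqrt, hSdef, Matrix.mul_assoc, Matrix.mul_apply]
    simp only [Matrix.mul_apply, Matrix.diagonal_apply, Matrix.transpose_apply, ite_mul,
      zero_mul, Finset.sum_ite_eq, Finset.mem_univ, if_true]
    exact Finset.sum_congr rfl fun k _ => by ring
  have hCjj : (absMinus A) j j = ∑ k, Real.sqrt (μ k) * (U j k) ^ 2 := by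
    rw [absMinus]
    simp only [Matrix.mul_apply, Matrix.diagonal_apply, RCLike.ofReal_real_eq_id,
      Matrix.star_apply, Function.comp_apply, star_trivial, id_eq,
      Finset.sum_ite_eq', Finset.mem_univ, if_true, mul_ite, mul_zero, ite_mul, zero_mul]
    exact Finset.sum_congr rfl fun k _ => by rw [← hμdef, ← hUdef]; ring
  -- expression for A i j
  have hAij : A i j = ∑ k, W i k * U j k := by
    have hA : A = W * Uᵀ := by rw [hWdef, Matrix.mul_assoc, hU1, Matrix.mul_one]
    conv_lhs => rw [hA]
    simp [Matrix.mul_apply, Matrix.transpose_apply]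
  -- Cauchy–Schwarz
  set a : Fin n → ℝ := fun k => Real.sqrt (g (μ k)) * W i k with hadef
  set b : Fin n → ℝ := fun k => Real.sqrt (Real.sqrt (μ k)) * U j k with hbdef
  have hab : ∀ k, a k * b k = W i k * U j k := by
    intro k
    rcases lt_or_eq_of_le (hμ0 k) with hk | hk
    · have hg : g (μ k) = (Real.sqrt (μ k))⁻¹ := by rw [hgdef]; exact if_pos hk
      have hsq : Real.sqrt (Real.sqrt (μ k)) ≠ 0 := by positivity
      rw [hadef, hbdef]; dsimp only
      rw [hg, Real.sqrt_inv]
      field_simp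
    · have hw : W i k = 0 := hW0 k hk.symm i
      rw [hadef, hbdef]; dsimp only
      rw [hw]; ring
  have ha2 : ∀ k, a k ^ 2 = g (μ k) * (W i k) ^ 2 := by
    intro k
    rw [hadef]; dsimp only
    rw [mul_pow, Real.sq_sqrt (hg0 (μ k))]
  have hb2 : ∀ k, b k ^ 2 = Real.sqrt (μ k) * (U j k) ^ 2 := by
    intro k
    rw [hbdef]; dsimp only
    rw [mul_pow, Real.sq_sqrt (Real.sqrt_nonneg (μ k))]
  calc (A i j) ^ 2 = (∑ k, a k * b k) ^ 2 := by
        rw [hAij]; congr 1; exact Finset.sum_congr rfl fun k _ => (hab k).symm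
    _ ≤ (∑ k, a k ^ 2) * (∑ k, b k ^ 2) := Finset.sum_mul_sq_le_sq_mul_sq _ _ _
    _ = (absPlus A) i i * (absMinus A) j j := by
        rw [hBii, hCjj]
        congr 1
        · exact Finset.sum_congr rfl fun k _ => ha2 k
        · exact Finset.sum_congr rfl fun k _ => hb2 k

/-- If `(v_i, v_j)` is an edge of a simple digraph then `E⁺(v_i) + E⁻(v_j) ≥ 2`. -/
theorem stmt_2 {n : ℕ} (E : Fin n → Fin n → Prop) [DecidableRel E]
    (hloop : ∀ v, ¬ E v v) (i j : Fin n) (hij : E i j) :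
    2 ≤ (absPlus (adjMat E)) i i + (absMinus (adjMat E)) j j := by
  have h1 : adjMat E i j = 1 := by simp [adjMat, hij]
  have hk := key_ineq (adjMat E) i j
  rw [h1] at hk
  have hb : 0 ≤ (absPlus (adjMat E)) i i :=
    posSemidef_diag_nonneg (absPlus_psd _) i
  have hc : 0 ≤ (absMinus (adjMat E)) j j :=
    posSemidef_diag_nonneg (absMinus_psd _) j
  nlinarith [sq_nonneg ((absPlus (adjMat E)) i i - (absMinus (adjMat E)) j j),
    sq_nonneg ((absPlus (adjMat E)) i i + (absMinus (adjMat E)) j j - 2)]
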